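/- arXiv:1205.6787 — 10 statements merged into one kernel-verified Lean document; each statement's English description precedes it below -/
import Mathlib

section
/- Let w be a primitive string of length at least 2, and write w_min = p_min p_max and w_max = p_max p_min where w_min and w_max are the lexicographically minimal and maximal rotations of w. Then w_max is the only rotation of w that has p_max as a prefix, and w_min is the only rotation of w that has p_min as a prefix. -/
def Primitive {α : Type*} (w : List α) : Prop :=
  ∀ (v : List α) (k : ℕ), 2 ≤ k → w ≠ (List.replicate k v).flatten

private lemma lex_trichotomy' {α : Type*} [LinearOrder α] :
    ∀ s p : List α, s = p ∨ List.Lex (· < ·) s p ∨ List.Lex (· < ·) p s := by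
  intro s
  induction s with
  | nil => intro p; cases p with
    | nil => left; rfl
    | cons b l => right; left; exact List.Lex.nil
  | cons a t ih =>
    intro p
    cases p with
    | nil => right; right; exact List.Lex.nil
    | cons b l =>
      rcases lt_trichotomy a b with h | h | h
      · right; left; exact List.Lex.rel h
      · subst h
        rcases ih l with h | h | h
        · left; rw [h]
        · right; left; exact List.Lex.cons h
        · right; right; exact List.Lex.cons h
      · right; right; exact List.Lex.rel h

private lemma lex_append_left' {α : Type*} [LinearOrder α] {b c : List α}
    (h : List.Lex (· < ·) b c) (a : List α) :
    List.Lex (· < ·) (a ++ b) (a ++ c) := by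
  induction a with
  | nil => exact h
  | cons x t ih => exact List.Lex.cons ih

private lemma lex_append_right' {α : Type*} [LinearOrder α] :
    ∀ {s p : List α}, s.length = p.length → List.Lex (· < ·) s p →
      ∀ x y : List α, List.Lex (· < ·) (s ++ x) (p ++ y) := by
  intro s
  induction s with
  | nil => intro p hl h x y; cases p with
    | nil => exact absurd h (by intro h; cases h)
    | cons b l => simp at hl
  | cons a t ih =>
    intro p hl h x y
    cases p with
    | nil => simp at hl
    | cons b l =>
      cases h with
      | rel h => exact List.Lex.rel h
      | cons h => exact List.Lex.cons (ih (by simpa using hl) h x y)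

/-- Let `w` be primitive with `|w| ≥ 2`, with minimal rotation `zmin = pmin ++ pmax`
and maximal rotation `zmax = pmax ++ pmin`. Then `zmax` is the only rotation of `w`
having `pmax` as a prefix, and `zmin` is the only rotation having `pmin` as a prefix. -/
theorem unique_rotation_with_extremal_prefix {α : Type*} [LinearOrder α]
    (w zmin zmax pmin pmax : List α)
    (hw : Primitive w) (hlen : 2 ≤ w.length)
    (hminrot : w.IsRotated zmin) (hmaxrot : w.IsRotated zmax)
    (hmin : ∀ z, w.IsRotated z → ¬ List.Lex (· < ·) z zmin)
    (hmax : ∀ z, w.IsRotated z → ¬ List.Lex (· < ·) zmax z)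
    (hzmin : zmin = pmin ++ pmax) (hzmax : zmax = pmax ++ pmin) :
    (∀ z, w.IsRotated z → pmax <+: z → z = zmax) ∧
    (∀ z, w.IsRotated z → pmin <+: z → z = zmin) := by
  have hlenmin : zmin.length = w.length := (hminrot.perm.length_eq).symm
  have hlenmax : zmax.length = w.length := (hmaxrot.perm.length_eq).symm
  constructor
  · intro z hz hp
    obtain ⟨s, hs⟩ := hp
    have hzl : z.length = w.length := (hz.perm.length_eq).symm
    have hslen : s.length = pmin.length := by
      have := congrArg List.length hs
      simp [hzl, ← hlenmax, hzmax] at this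
      omega
    have hrot : w.IsRotated (s ++ pmax) :=
      hz.trans (by rw [← hs]; exact List.isRotated_append)
    rcases lex_trichotomy' s pmin with h | h | h
    · rw [← hs, h, ← hzmax]
    · exact absurd (lex_append_right' hslen h pmax pmax)
        (by rw [← hzmin]; exact hmin _ hrot)
    · exact absurd (lex_append_left' h pmax)
        (by rw [← hzmax]; exact hmax _ (hs ▸ hz))
  · intro z hz hp
    obtain ⟨t, ht⟩ := hp
    have hzl : z.length = w.length := (hz.perm.length_eq).symm
    have htlen : t.length = pmax.length := by
      have := congrArg List.length ht
      simp [hzl, ← hlenmin, hzmin] at this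
      omega
    have hrot : w.IsRotated (t ++ pmin) :=
      hz.trans (by rw [← ht]; exact List.isRotated_append)
    rcases lex_trichotomy' t pmax with h | h | h
    · rw [← ht, h, ← hzmin]
    · exact absurd (lex_append_left' h pmin)
        (by rw [← hzmin]; exact hmin _ (ht ▸ hz))
    · exact absurd (lex_append_right' htlen.symm h pmin pmin)
        (by rw [← hzmax] at *; exact hmax _ hrot)
end

section
/- Every primitive string w has an unbordered rotation; in particular, the lexicographically maximal rotation w_max of w is unbordered. -/
/-- A nonempty proper prefix of `s` that is also a suffix of `s` is a border;
`s` is unbordered if it has none. -/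
def Unbordered {α : Type*} (s : List α) : Prop :=
  ∀ b : List α, b ≠ [] → b ≠ s → b <+: s → ¬ b <:+ s

namespace List

variable {α : Type*}

theorem exists_flatten_replicate_of_append_comm {b u : List α} (h : b ++ u = u ++ b) :
    ∃ t k m, b = (replicate k t).flatten ∧ u = (replicate m t).flatten := by
  induction hn : b.length + u.length using Nat.strong_induction_on generalizing b u with
  | _ n ih =>
  wlog hle : b.length ≤ u.length generalizing b u
  · obtain ⟨t, k, m, hb, hu⟩ := this h.symm (by omega) (by omega)
    exact ⟨t, m, k, hu, hb⟩
  rcases eq_or_ne b [] with rfl | hb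
  · exact ⟨u, 0, 1, by simp, by simp⟩
  obtain ⟨s, rfl⟩ : b <+: u :=
    prefix_of_prefix_length_le (h ▸ prefix_append b u) (prefix_append u b) hle
  have hs : b ++ s = s ++ b := by simpa using h
  obtain ⟨t, k, m, rfl, rfl⟩ := ih _ (by simp [← hn, length_pos_iff.mpr hb]) hs rfl
  exact ⟨t, k, k + m, rfl, by rw [← flatten_append, ← replicate_add]⟩

theorem flatten_replicate_append_append (p q : List α) (k : ℕ) :
    (replicate k (p ++ q)).flatten ++ p = p ++ (replicate k (q ++ p)).flatten := by
  induction k with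
  | zero => simp
  | succ k ih => simp [replicate_succ, ih]

theorem rotate_length_flatten_replicate_append (p q : List α) (k : ℕ) :
    (replicate k (p ++ q)).flatten.rotate p.length = (replicate k (q ++ p)).flatten := by
  cases k with
  | zero => simp
  | succ k =>
    rw [replicate_succ', flatten_concat, ← append_assoc, flatten_replicate_append_append,
      append_assoc, rotate_append_length_eq, replicate_succ', flatten_concat, append_assoc]

theorem rotate_one_flatten_replicate (t : List α) (k : ℕ) :
    (replicate k t).flatten.rotate 1 = (replicate k (t.rotate 1)).flatten := by
  cases t with
  | nil => simp
  | cons a s => simpa using rotate_length_flatten_replicate_append [a] s k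

theorem rotate_flatten_replicate (t : List α) (k n : ℕ) :
    (replicate k t).flatten.rotate n = (replicate k (t.rotate n)).flatten := by
  induction n with
  | zero => simp
  | succ n ih => rw [← rotate_rotate, ih, rotate_one_flatten_replicate, rotate_rotate]

theorem Lex.append_of_length_eq {r : α → α → Prop} {u v : List α} (h : Lex r u v)
    (hl : u.length = v.length) (s t : List α) : Lex r (u ++ s) (v ++ t) := by
  induction h with
  | nil => simp at hl
  | cons _ ih => exact Lex.cons (ih (by simpa using hl))
  | rel h => exact Lex.rel h

end List

open List

section Primitive

variable {α : Type*}

theorem Primitive.isRotated {w z : List α} (hw : Primitive w) (h : w.IsRotated z) :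
    Primitive z := by
  rintro v k hk rfl
  obtain ⟨n, rfl⟩ := h.symm
  exact hw (v.rotate n) k hk (rotate_flatten_replicate v k n)

theorem Primitive.eq_nil_or_eq_nil_of_append_comm {b u : List α} (hp : Primitive (b ++ u))
    (h : b ++ u = u ++ b) : b = [] ∨ u = [] := by
  obtain ⟨t, k, m, rfl, rfl⟩ := exists_flatten_replicate_of_append_comm h
  by_contra! hne
  refine hp t (k + m) ?_ (by rw [← flatten_append, ← replicate_add])
  have hk : k ≠ 0 := by rintro rfl; simp at hne
  have hm : m ≠ 0 := by rintro rfl; simp at hne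
  omega

theorem Primitive.unbordered_of_forall_not_lt_rotate [LinearOrder α] {z : List α}
    (hz : Primitive z) (hmax : ∀ n, ¬ z < z.rotate n) : Unbordered z := by
  rintro b hb hbz ⟨u, rfl⟩ ⟨v, hv⟩
  have hlen : u.length = v.length := by
    have := congrArg length hv
    simp only [length_append] at this
    omega
  have hu_not_lt : ¬ u < v := fun h => hmax v.length (by
    rw [← hv, rotate_append_length_eq, hv]; exact append_left_lt h)
  have hv_not_lt : ¬ v < u := fun h => hmax b.length (by
    rw [rotate_append_length_eq, ← hv]; exact h.append_of_length_eq hlen.symm b b)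
  obtain rfl : u = v := le_antisymm (not_lt.mp hv_not_lt) (not_lt.mp hu_not_lt)
  rcases hz.eq_nil_or_eq_nil_of_append_comm hv.symm with rfl | rfl
  · exact hb rfl
  · exact hbz (append_nil b).symm

end Primitive

/-- Every primitive string has an unbordered rotation; in particular the
lexicographically maximal rotation is unbordered. -/
theorem max_rotation_unbordered {α : Type*} [LinearOrder α] (w zmax : List α)
    (hw : Primitive w)
    (hmaxrot : w.IsRotated zmax)
    (hmax : ∀ z, w.IsRotated z → ¬ List.Lex (· < ·) zmax z) :
    Unbordered zmax ∧ ∃ z, w.IsRotated z ∧ Unbordered z := by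
  have hunb : Unbordered zmax := (hw.isRotated hmaxrot).unbordered_of_forall_not_lt_rotate
    fun n => hmax _ (hmaxrot.trans ⟨n, rfl⟩)
  exact ⟨hunb, zmax, hmaxrot, hunb⟩
end

section
/- The lexicographically minimal rotation of a primitive string is unbordered. -/
namespace List

variable {α : Type*}

theorem Lex.append_right_of_length_eq {r : α → α → Prop} :
    ∀ {u v : List α}, u.length = v.length → Lex r u v → ∀ t, Lex r (u ++ t) (v ++ t)
  | _, _, hl, .nil, _ => by simp at hl
  | _, _, hl, .cons h, t => .cons (append_right_of_length_eq (by simpa using hl) h t)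
  | _, _, _, .rel h, _ => .rel h

theorem exists_eq_flatten_replicate_of_append_comm {x y : List α} (h : x ++ y = y ++ x) :
    ∃ (t : List α) (i j : ℕ), x = (replicate i t).flatten ∧ y = (replicate j t).flatten := by
  induction hn : x.length + y.length using Nat.strong_induction_on generalizing x y with
  | _ n ih =>
  wlog hxy : x.length ≤ y.length generalizing x y
  · obtain ⟨t, i, j, hy, hx⟩ := this h.symm (by omega) (by omega)
    exact ⟨t, j, i, hx, hy⟩
  obtain ⟨z, rfl⟩ : x <+: y :=
    prefix_of_prefix_length_le (prefix_append x y) (h ▸ prefix_append y x) hxy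
  rcases eq_or_ne x [] with rfl | hx
  · exact ⟨z, 0, 1, by simp, by simp⟩
  have hxz : x ++ z = z ++ x := by simpa using h
  have hlt : x.length + z.length < n := by
    have := length_pos_iff.mpr hx
    simp only [length_append] at hn
    omega
  obtain ⟨t, i, j, rfl, rfl⟩ := ih _ hlt hxz rfl
  exact ⟨t, i, i + j, rfl, by rw [← flatten_append, ← replicate_add]⟩

theorem append_flatten_replicate_append_comm (a c : List α) (k : ℕ) :
    c ++ (replicate k (a ++ c)).flatten = (replicate k (c ++ a)).flatten ++ c := by
  induction k with
  | zero => simp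
  | succ k ih => simp only [replicate_succ, flatten_cons, append_assoc, ← ih]

theorem flatten_replicate_rotate_one (x : List α) (k : ℕ) :
    (replicate k x).flatten.rotate 1 = (replicate k (x.rotate 1)).flatten := by
  rcases x with _ | ⟨a, x⟩
  · simp
  rcases k with _ | k
  · simp
  have h := append_flatten_replicate_append_comm [a] x k
  rw [replicate_succ, flatten_cons, cons_append, rotate_cons_succ, rotate_zero, rotate_cons_succ,
    rotate_zero, replicate_succ', flatten_append, flatten_singleton]
  simpa using congrArg (· ++ [a]) h

theorem flatten_replicate_rotate (x : List α) (k n : ℕ) :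
    (replicate k x).flatten.rotate n = (replicate k (x.rotate n)).flatten := by
  induction n with
  | zero => simp
  | succ n ih => rw [← rotate_rotate, ih, flatten_replicate_rotate_one, rotate_rotate]

theorem IsRotated.primitive {w z : List α} (h : w ~r z) (hw : Primitive w) : Primitive z := by
  rintro v k hk rfl
  obtain ⟨n, rfl⟩ := h.symm
  exact hw (v.rotate n) k hk (flatten_replicate_rotate v k n)

end List

/-- The lexicographically minimal rotation of a primitive string is unbordered. -/
theorem min_rotation_unbordered {α : Type*} [LinearOrder α] (w zmin : List α)
    (hw : Primitive w)
    (hminrot : w.IsRotated zmin)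
    (hmin : ∀ z, w.IsRotated z → ¬ List.Lex (· < ·) z zmin) :
    Unbordered zmin := by
  rintro b hb hbz ⟨u, rfl⟩ ⟨v, hv⟩
  have hlen : u.length = v.length := by
    have := congrArg List.length hv
    simp only [List.length_append] at this
    omega
  have huv : u = v := by
    rcases lt_trichotomy u v with hlt | heq | hgt
    · exact absurd (hv ▸ hlt.append_right_of_length_eq hlen b)
        (hmin _ (hminrot.trans List.isRotated_append))
    · exact heq
    · exact absurd (hgt.append_left _ b) (hmin _ (hminrot.trans (hv ▸ List.isRotated_append)))
  subst huv
  obtain ⟨t, i, j, rfl, rfl⟩ := List.exists_eq_flatten_replicate_of_append_comm hv.symm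
  have hi : i ≠ 0 := by rintro rfl; simp at hb
  have hj : j ≠ 0 := by rintro rfl; simp at hbz
  exact hminrot.primitive hw t (i + j) (by omega)
    (by rw [← List.flatten_append, ← List.replicate_add])
end

section
/- Let w₁ and w₂ be primitive, unbordered, non-equivalent strings (no rotation of w₁ equals w₂), let x₁ be a prefix of w₁^∞ and x₂ a prefix of w₂^∞, and let α₂ be an integer with 0 < α₂ ≤ |w₂|/2 such that w₂[1..α₂] occurs as a prefix of exactly one rotation of w₂. Then the overlap of x₁ and x₂ (the longest suffix of x₁ that is a prefix of x₂) has length strictly less than |w₁| + α₂. -/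
/-- `x` is a prefix of the infinite string `w^∞`. -/
def IsPrefixOfInfPow {α : Type*} (x w : List α) : Prop :=
  ∃ m : ℕ, x <+: (List.replicate m w).flatten

namespace List

variable {α : Type*}

theorem flatten_replicate_prefix_flatten_replicate (w : List α) {m n : ℕ} (h : m ≤ n) :
    (replicate m w).flatten <+: (replicate n w).flatten := by
  obtain ⟨k, rfl⟩ := Nat.exists_eq_add_of_le h
  rw [replicate_add, flatten_append]
  exact prefix_append _ _

theorem rotate_flatten_replicate_append (a b : List α) (m : ℕ) :
    ((replicate m (a ++ b)).flatten).rotate a.length = (replicate m (b ++ a)).flatten := by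
  have hconj : ∀ k, (replicate k (a ++ b)).flatten ++ a = a ++ (replicate k (b ++ a)).flatten := by
    intro k
    induction k with
    | zero => simp
    | succ k ih => simp only [replicate_succ, flatten_cons, append_assoc, ih]
  cases m with
  | zero => simp
  | succ k =>
    simp only [replicate_succ, flatten_cons, append_assoc, rotate_append_length_eq, hconj]

theorem rotate_flatten_replicate_s6 (w : List α) (m t : ℕ) :
    ((replicate m w).flatten).rotate t = (replicate m (w.rotate t)).flatten := by
  have rotate_one : ∀ v : List α,
      ((replicate m v).flatten).rotate 1 = (replicate m (v.rotate 1)).flatten := by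
    rintro (_ | ⟨x, v⟩)
    · simp
    · simpa using rotate_flatten_replicate_append [x] v m
  induction t with
  | zero => simp
  | succ t ih => rw [← rotate_rotate, ih, rotate_one, rotate_rotate]

theorem drop_prefix_rotate (l : List α) (n : ℕ) : l.drop n <+: l.rotate n := by
  rcases le_or_gt n l.length with h | h
  · rw [rotate_eq_drop_append_take h]
    exact prefix_append _ _
  · rw [drop_eq_nil_of_le h.le]
    exact nil_prefix

end List

open List

section Words

variable {α : Type*} {w v x y : List α}

theorem Primitive.ne_nil (hw : Primitive w) : w ≠ [] :=
  fun h => hw [] 2 le_rfl (by simp [h])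

theorem Primitive.isRotated_of_isRotated_flatten_replicate {k : ℕ} (hw : Primitive w)
    (h : w ~r (replicate k v).flatten) : w ~r v := by
  obtain ⟨n, hn⟩ := h.symm
  rw [rotate_flatten_replicate_s6] at hn
  match k, hn with
  | 0, hn => exact absurd hn.symm (by simpa using hw.ne_nil)
  | 1, hn => exact IsRotated.symm ⟨n, by simpa using hn⟩
  | k + 2, hn => exact absurd hn.symm (hw _ _ (by omega))

theorem Unbordered.dvd_length_of_rotate_eq {n : ℕ} (hw : Unbordered w) (hne : w ≠ [])
    (h : w.rotate n = w) : w.length ∣ n := by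
  set r := n % w.length with hr
  have hrlt : r < w.length := Nat.mod_lt _ (length_pos_iff.2 hne)
  have hsplit : w.drop r ++ w.take r = w := by
    rw [← rotate_eq_drop_append_take hrlt.le, hr, rotate_mod, h]
  by_contra hndvd
  refine hw (w.take r) ?_ ?_ (take_prefix _ _) ⟨w.drop r, hsplit⟩
  · simpa [take_eq_nil_iff, hne] using fun h0 => hndvd (Nat.dvd_of_mod_eq_zero h0)
  · intro hself
    have := congrArg length hself
    rw [length_take] at this
    omega

namespace IsPrefixOfInfPow

theorem self (w : List α) : IsPrefixOfInfPow w w :=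
  ⟨1, by simp⟩

theorem flatten_replicate (w : List α) (k : ℕ) : IsPrefixOfInfPow (replicate k w).flatten w :=
  ⟨k, prefix_rfl⟩

theorem mono (hy : IsPrefixOfInfPow y w) (hxy : x <+: y) : IsPrefixOfInfPow x w :=
  let ⟨m, hm⟩ := hy; ⟨m, hxy.trans hm⟩

theorem eq_nil_of_nil (hx : IsPrefixOfInfPow x ([] : List α)) : x = [] := by
  obtain ⟨m, hm⟩ := hx
  simpa using hm

theorem prefix_of_length_le (hx : IsPrefixOfInfPow x w) (hy : IsPrefixOfInfPow y w)
    (hlen : x.length ≤ y.length) : x <+: y := by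
  obtain ⟨m, hm⟩ := hx
  obtain ⟨n, hn⟩ := hy
  exact prefix_of_prefix_length_le
    (hm.trans (flatten_replicate_prefix_flatten_replicate w (le_max_left m n)))
    (hn.trans (flatten_replicate_prefix_flatten_replicate w (le_max_right m n))) hlen

theorem drop (hx : IsPrefixOfInfPow x w) (t : ℕ) : IsPrefixOfInfPow (x.drop t) (w.rotate t) := by
  obtain ⟨m, hm⟩ := hx
  refine ⟨m, (hm.drop t).trans ?_⟩
  rw [← rotate_flatten_replicate_s6]
  exact drop_prefix_rotate _ _

theorem drop_length (hx : IsPrefixOfInfPow x w) : IsPrefixOfInfPow (x.drop w.length) w := by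
  simpa [rotate_length] using hx.drop w.length

theorem exists_rotate_of_suffix (hx : IsPrefixOfInfPow x w) (hyx : y <:+ x) :
    ∃ n, IsPrefixOfInfPow y (w.rotate n) := by
  rw [suffix_iff_eq_drop.1 hyx]
  exact ⟨_, hx.drop _⟩

end IsPrefixOfInfPow

end Words

theorem overlap_lt_len_add_alpha_general {α : Type*} (w₁ w₂ x₁ x₂ ov : List α) (α₂ : ℕ)
    (hp₁ : Primitive w₁)
    (hu₂ : Unbordered w₂)
    (hne : ¬ w₁.IsRotated w₂)
    (hx₁ : IsPrefixOfInfPow x₁ w₁) (hx₂ : IsPrefixOfInfPow x₂ w₂)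
    (huniq : ∀ z, w₂.IsRotated z → w₂.take α₂ <+: z → z = w₂)
    (hov₁ : ov <:+ x₁) (hov₂ : ov <+: x₂) :
    ov.length < w₁.length + α₂ := by
  by_contra! hlong
  obtain ⟨n, hρ⟩ := hx₁.exists_rotate_of_suffix hov₁
  have hov : IsPrefixOfInfPow ov w₂ := hx₂.mono hov₂
  have hpre : IsPrefixOfInfPow (w₂.take α₂) w₂ := (IsPrefixOfInfPow.self w₂).mono (take_prefix _ _)
  have hp_ov : w₂.take α₂ <+: ov := hpre.prefix_of_length_le hov (by rw [length_take]; omega)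
  have hp_shift : w₂.take α₂ <+: ov.drop w₁.length := by
    refine (hρ.mono hp_ov).prefix_of_length_le ?_ (by rw [length_take, length_drop]; omega)
    simpa using hρ.drop_length
  have hrot : w₂.rotate w₁.length = w₂ :=
    huniq _ ⟨_, rfl⟩ (((hov.drop w₁.length).mono hp_shift).prefix_of_length_le
      (IsPrefixOfInfPow.self _) (by simp))
  have hw₂ : w₂ ≠ [] := by
    rintro rfl
    rw [hov.eq_nil_of_nil, length_nil] at hlong
    exact hp₁.ne_nil (length_eq_zero_iff.1 (by omega))
  obtain ⟨k, hk⟩ := hu₂.dvd_length_of_rotate_eq hw₂ hrot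
  have hlen : (w₁.rotate n).length = ((replicate k w₂).flatten).length := by
    simp [hk, Nat.mul_comm]
  have hρ_eq : w₁.rotate n = (replicate k w₂).flatten := by
    have hρ_ov : w₁.rotate n <+: ov :=
      (IsPrefixOfInfPow.self _).prefix_of_length_le hρ (by rw [length_rotate]; omega)
    have hpow_ov : (replicate k w₂).flatten <+: ov :=
      (IsPrefixOfInfPow.flatten_replicate w₂ k).prefix_of_length_le hov
        (by rw [← hlen, length_rotate]; omega)
    exact (prefix_of_prefix_length_le hρ_ov hpow_ov hlen.le).eq_of_length hlen
  exact hne (hp₁.isRotated_of_isRotated_flatten_replicate ⟨n, hρ_eq⟩)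

/-- Breslauer-type overlap bound: if `w₁, w₂` are primitive, unbordered and
non-equivalent, `xᵢ` is a prefix of `wᵢ^∞`, and `0 < α₂ ≤ |w₂|/2` is such that
the prefix `w₂[1..α₂]` occurs as a prefix of exactly one rotation of `w₂`
(namely `w₂` itself), then the overlap of `x₁` and `x₂` (the longest suffix of
`x₁` that is a prefix of `x₂`) has length `< |w₁| + α₂`. -/
theorem overlap_lt_len_add_alpha {α : Type*} (w₁ w₂ x₁ x₂ ov : List α) (α₂ : ℕ)
    (hp₁ : Primitive w₁) (hp₂ : Primitive w₂)
    (hu₁ : Unbordered w₁) (hu₂ : Unbordered w₂)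
    (hne : ¬ w₁.IsRotated w₂)
    (hx₁ : IsPrefixOfInfPow x₁ w₁) (hx₂ : IsPrefixOfInfPow x₂ w₂)
    (hα₂pos : 0 < α₂) (hα₂le : 2 * α₂ ≤ w₂.length)
    (huniq : ∀ z, w₂.IsRotated z → w₂.take α₂ <+: z → z = w₂)
    (hov₁ : ov <:+ x₁) (hov₂ : ov <+: x₂)
    (hovmax : ∀ u : List α, u <:+ x₁ → u <+: x₂ → u.length ≤ ov.length) :
    ov.length < w₁.length + α₂ :=
  overlap_lt_len_add_alpha_general w₁ w₂ x₁ x₂ ov α₂ hp₁ hu₂ hne hx₁ hx₂ huniq hov₁ hov₂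
end

section
/- Suppose a string y of length at least k·l (for positive integer l = |w₂| and integer k ≥ 1) is a prefix of w₂^∞ for an unbordered string w₂, and also a suffix-aligned factor of powers of a primitive string w₁ with |w₁| not a multiple of |w₂| and |w₁| < k·|w₂|; then we reach a contradiction: a nontrivial suffix of w₂ that is also a prefix of w₂ would exist. Formally: if w₂ is unbordered and some string has both a prefix equal to w₂^k and period |w₁| with (k-1)|w₂| < |w₁| < k|w₂| and length ≥ k|w₂|, then there is a nonempty proper prefix of w₂ equal to a suffix of w₂, contradiction. Hence no string of length ≥ k|w₂| can simultaneously be a prefix of w₂^∞ and have period p with (k-1)|w₂| < p < k|w₂|. -/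
/-- `s` has period `p`: `s[i] = s[i+p]` whenever both indices are valid. -/
def HasPeriod {α : Type*} (s : List α) (p : ℕ) : Prop :=
  ∀ i : ℕ, i + p < s.length → s[i]? = s[i + p]?

/-!
Write `p = (k-1)|w₂| + d` with `0 < d < |w₂|`. Comparing positions `i` and `i + p` of the
prefix `w₂^k` of `s` for `i < |w₂| - d` shows that `w₂` itself has period `d`, so the prefix of
`w₂` of length `|w₂| - d` equals its suffix of that length: a border of `w₂`.
-/

section

variable {α : Type*}

theorem List.getElem?_flatten_replicate (w : List α) {m j : ℕ} (hj : j < m * w.length) :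
    (List.replicate m w).flatten[j]? = w[j % w.length]? := by
  induction m generalizing j with
  | zero => simp at hj
  | succ m ih =>
    rw [List.replicate_succ, List.flatten_cons]
    by_cases hjw : j < w.length
    · rw [List.getElem?_append_left hjw, Nat.mod_eq_of_lt hjw]
    · rw [Nat.not_lt] at hjw
      rw [List.getElem?_append_right hjw, Nat.mod_eq_sub_mod hjw]
      exact ih (by rw [Nat.succ_mul] at hj; omega)

theorem IsPrefixOfInfPow.getElem?_eq {x w : List α} (hx : IsPrefixOfInfPow x w) {i : ℕ}
    (hi : i < x.length) : x[i]? = w[i % w.length]? := by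
  obtain ⟨m, t, hm⟩ := hx
  have hlen : x.length ≤ m * w.length := by
    have := congrArg List.length hm
    simp only [List.length_append, List.length_flatten, List.map_replicate, List.sum_replicate,
      smul_eq_mul] at this
    omega
  rw [← List.getElem?_append_left (l₂ := t) hi, hm, List.getElem?_flatten_replicate w (by omega)]

theorem IsPrefixOfInfPow.hasPeriod_of_hasPeriod_mul_add {x w : List α}
    (hx : IsPrefixOfInfPow x w) {q d : ℕ} (hlen : q * w.length + w.length ≤ x.length)
    (hper : HasPeriod x (q * w.length + d)) : HasPeriod w d := by
  intro i hi
  have hxi := hper i (by omega)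
  rwa [hx.getElem?_eq (by omega), hx.getElem?_eq (by omega), Nat.mod_eq_of_lt (by omega),
    show i + (q * w.length + d) = i + d + q * w.length by omega, Nat.add_mul_mod_self_right,
    Nat.mod_eq_of_lt hi] at hxi

theorem HasPeriod.drop_eq_take {w : List α} {d : ℕ} (h : HasPeriod w d) :
    w.drop d = w.take (w.length - d) := by
  refine List.ext_getElem? fun i => ?_
  rw [List.getElem?_drop, Nat.add_comm]
  by_cases hi : i < w.length - d
  · rw [List.getElem?_take_of_lt hi, h i (by omega)]
  · rw [List.getElem?_eq_none_iff.mpr (show w.length ≤ i + d by omega),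
      List.getElem?_eq_none_iff.mpr (show (w.take (w.length - d)).length ≤ i by simp; omega)]

theorem Unbordered.not_hasPeriod {w : List α} (hw : Unbordered w) {d : ℕ} (hd : 0 < d)
    (hdw : d < w.length) : ¬ HasPeriod w d := by
  intro hper
  refine hw (w.take (w.length - d)) ?_ ?_ (List.take_prefix _ _) ?_
  · exact List.ne_nil_of_length_pos (by simp; omega)
  · exact fun h => by have := congrArg List.length h; simp at this; omega
  · exact hper.drop_eq_take ▸ List.drop_suffix _ _

end

theorem no_intermediate_period_general {α : Type*} (w₂ s : List α) (k p : ℕ)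
    (hub : Unbordered w₂)
    (hslen : k * w₂.length ≤ s.length)
    (hpre : IsPrefixOfInfPow s w₂)
    (hplo : (k - 1) * w₂.length < p) (hphi : p < k * w₂.length)
    (hper : HasPeriod s p) :
    False := by
  have hk : k ≠ 0 := by rintro rfl; simp at hphi
  have hkl : k * w₂.length = (k - 1) * w₂.length + w₂.length := by
    rw [Nat.sub_one_mul, Nat.sub_add_cancel (Nat.le_mul_of_pos_left _ (by omega))]
  obtain ⟨d, rfl⟩ : ∃ d, p = (k - 1) * w₂.length + d := ⟨p - (k - 1) * w₂.length, by omega⟩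
  exact hub.not_hasPeriod (by omega) (by omega)
    (hpre.hasPeriod_of_hasPeriod_mul_add (by omega) hper)

/-- No string of length at least `k·|w₂|` can simultaneously be a prefix of
`w₂^∞` for an unbordered `w₂` and have a period `p` strictly between
`(k-1)·|w₂|` and `k·|w₂|`. -/
theorem no_intermediate_period {α : Type*} (w₂ s : List α) (k p : ℕ)
    (hub : Unbordered w₂) (hk : 1 ≤ k)
    (hslen : k * w₂.length ≤ s.length)
    (hpre : IsPrefixOfInfPow s w₂)
    (hplo : (k - 1) * w₂.length < p) (hphi : p < k * w₂.length)
    (hper : HasPeriod s p) :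
    False :=
  no_intermediate_period_general w₂ s k p hub hslen hpre hplo hphi hper
end

section
/- Let u, w₂ be strings over an ordered alphabet with w₂ nonempty, and suppose r₁ = w₂w₂u, r₂ = w₂uw₂, r₃ = uw₂w₂ are three rotations of a primitive string; then the lexicographically largest of r₁, r₂, r₃ is not r₂. -/
private lemma lex_append_left_iff {α : Type*} [LinearOrder α] (x a b : List α) :
    List.Lex (· < ·) (x ++ a) (x ++ b) ↔ List.Lex (· < ·) a b := by
  induction x with
  | nil => simp
  | cons c x ih => simpa [List.lex_cons_iff] using ih

private lemma lex_append_right {α : Type*} [LinearOrder α] {a b : List α} (c : List α)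
    (h : List.Lex (· < ·) a b) (hlen : a.length = b.length) :
    List.Lex (· < ·) (a ++ c) (b ++ c) := by
  induction h with
  | nil => simp at hlen
  | @cons x l₁ l₂ h ih =>
      exact List.Lex.cons (ih (by simpa using hlen))
  | @rel x l₁ y l₂ h => exact List.Lex.rel h

private lemma comm_aux {α : Type*} : ∀ (n : ℕ) (x s : List α),
    x.length + s.length ≤ n → x ++ s = s ++ x →
    ∃ (t : List α) (k m : ℕ), x = (List.replicate k t).flatten ∧
      s = (List.replicate m t).flatten := by
  intro n
  induction n with
  | zero =>
      intro x s hl _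
      have hx : x = [] := by
        cases x <;> simp_all
      have hs : s = [] := by
        cases s <;> simp_all
      exact ⟨[], 0, 0, by simp [hx], by simp [hs]⟩
  | succ n ih =>
      intro x s hl h
      rcases eq_or_ne x [] with hx | hx
      · exact ⟨s, 0, 1, by simp [hx], by simp⟩
      rcases eq_or_ne s [] with hs | hs
      · exact ⟨x, 1, 0, by simp, by simp [hs]⟩
      rcases le_or_gt x.length s.length with hle | hlt
      · -- x is a prefix of s
        have hx' : s.take x.length = x := by
          have := congrArg (fun l => List.take x.length l) h
          simpa [List.take_left', List.take_append_of_le_length hle] using this.symm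
        set s' := s.drop x.length with hs'
        have hsplit : s = x ++ s' := by
          rw [← hx', hs']; simp
        have h' : x ++ s' = s' ++ x := by
          have : x ++ (x ++ s') = (x ++ s') ++ x := by rw [← hsplit]; exact h
          rw [List.append_assoc] at this
          exact List.append_cancel_left this
        have hxlen : 1 ≤ x.length := by
          cases x; · simp at hx
          · simp
        have hlen' : x.length + s'.length ≤ n := by
          have : s'.length = s.length - x.length := by simp [hs']
          omega
        obtain ⟨t, k, m, htx, hts⟩ := ih x s' hlen' h'
        exact ⟨t, k, k + m, htx, by
          rw [hsplit, htx, hts, ← List.flatten_append, ← List.replicate_add]⟩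
      · -- s is a prefix of x
        have hx' : x.take s.length = s := by
          have := congrArg (fun l => List.take s.length l) h
          simpa [List.take_left', List.take_append_of_le_length hlt.le] using this
        set x' := x.drop s.length with hx'def
        have hsplit : x = s ++ x' := by
          rw [← hx', hx'def]; simp
        have h' : s ++ x' = x' ++ s := by
          have : s ++ (s ++ x') = (s ++ x') ++ s := by rw [← hsplit]; exact h.symm
          rw [List.append_assoc] at this
          exact List.append_cancel_left this
        have hslen : 1 ≤ s.length := by
          cases s; · simp at hs
          · simp
        have hlen' : s.length + x'.length ≤ n := by
          have : x'.length = x.length - s.length := by simp [hx'def]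
          omega
        obtain ⟨t, k, m, hts, htx⟩ := ih s x' hlen' h'
        exact ⟨t, k + m, k, by
          rw [hsplit, hts, htx, ← List.flatten_append, ← List.replicate_add], hts⟩

/-- If `r₁ = w₂w₂u`, `r₂ = w₂uw₂`, `r₃ = uw₂w₂` are rotations of a common
primitive string (with `w₂` nonempty), then the middle arrangement `r₂` is not
the lexicographically largest: `max(r₁,r₃) > r₂`. -/
theorem middle_rotation_not_max {α : Type*} [LinearOrder α] (w₂ u : List α)
    (hw₂ : w₂ ≠ [])
    (hprim : Primitive (w₂ ++ w₂ ++ u))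
    (hr₂ : (w₂ ++ w₂ ++ u).IsRotated (w₂ ++ u ++ w₂))
    (hr₃ : (w₂ ++ w₂ ++ u).IsRotated (u ++ w₂ ++ w₂)) :
    List.Lex (· < ·) (w₂ ++ u ++ w₂) (w₂ ++ w₂ ++ u) ∨
    List.Lex (· < ·) (w₂ ++ u ++ w₂) (u ++ w₂ ++ w₂) := by
  by_contra hcon
  push_neg at hcon
  obtain ⟨h1, h2⟩ := hcon
  -- translate to < on lists
  have h1' : ¬ (w₂ ++ u ++ w₂ : List α) < (w₂ ++ w₂ ++ u) := h1
  have h2' : ¬ (w₂ ++ u ++ w₂ : List α) < (u ++ w₂ ++ w₂) := h2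
  have le1 : (w₂ ++ w₂ ++ u : List α) ≤ w₂ ++ u ++ w₂ := not_lt.mp h1'
  have le2 : (u ++ w₂ ++ w₂ : List α) ≤ w₂ ++ u ++ w₂ := not_lt.mp h2'
  -- from le1 : w₂ ++ (w₂ ++ u) ≤ w₂ ++ (u ++ w₂), cancel to get w₂ ++ u ≤ u ++ w₂
  have le1' : (w₂ ++ u : List α) ≤ u ++ w₂ := by
    rcases le1.lt_or_eq with hlt | heq
    · have : List.Lex (· < ·) (w₂ ++ (w₂ ++ u)) (w₂ ++ (u ++ w₂)) := by
        simpa [List.append_assoc] using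
          (show List.Lex (· < ·) (w₂ ++ w₂ ++ u) (w₂ ++ u ++ w₂) from hlt)
      exact le_of_lt ((lex_append_left_iff w₂ (w₂ ++ u) (u ++ w₂)).mp this)
    · have : (w₂ ++ (w₂ ++ u) : List α) = w₂ ++ (u ++ w₂) := by
        simpa [List.append_assoc] using heq
      exact le_of_eq (List.append_cancel_left this)
  -- hence (w₂ ++ u) ++ w₂ ≤ (u ++ w₂) ++ w₂
  have le3 : (w₂ ++ u ++ w₂ : List α) ≤ u ++ w₂ ++ w₂ := by
    rcases le1'.lt_or_eq with hlt | heq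
    · exact le_of_lt (lex_append_right w₂ hlt (by simp [Nat.add_comm]))
    · exact le_of_eq (by rw [heq])
  have heq : (w₂ ++ u ++ w₂ : List α) = u ++ w₂ ++ w₂ := le_antisymm le3 le2
  have hcomm : w₂ ++ u = u ++ w₂ := List.append_cancel_right heq
  obtain ⟨t, k, m, htx, hts⟩ :=
    comm_aux (w₂.length + u.length) w₂ u le_rfl hcomm
  have hk : 1 ≤ k := by
    rcases Nat.eq_zero_or_pos k with hk0 | hk
    · rw [hk0] at htx; simp at htx; exact absurd htx hw₂
    · exact hk
  apply hprim t (k + k + m) (by omega)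
  rw [htx, hts, ← List.flatten_append, ← List.flatten_append,
    ← List.replicate_add, ← List.replicate_add]
end

section
/- Let w₂ be a nonempty string that is its own lexicographically maximal rotation (w₂ = (w₂)_max), let u be a prefix of w₂^∞, and consider the string s = w₂ u w₂^k and t = u w₂^{k+1} for k ≥ 0. If s ≠ t then s ≺ t in lexicographic order. -/
private lemma lex_append_same {α : Type*} {r : α → α → Prop} :
    ∀ {a b : List α}, List.Lex r a b → a.length = b.length →
      ∀ c : List α, List.Lex r (a ++ c) (b ++ c) := by
  intro a b h
  induction h with
  | nil => intro hl; simp at hl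
  | @cons x as bs _ ih =>
      intro hl c
      exact List.Lex.cons (ih (by simpa using hl) c)
  | rel hxy => intro _ c; exact List.Lex.rel hxy

private lemma decomp_prefix {α : Type*} {w : List α} :
    ∀ m (u : List α), u <+: (List.replicate m w).flatten →
      u <+: w ∨ ∃ u', u = w ++ u' ∧ IsPrefixOfInfPow u' w := by
  intro m
  induction m with
  | zero => intro u hu; simp at hu; exact Or.inl (by simp [hu])
  | succ m ih =>
      intro u hu
      rw [List.replicate_succ, List.flatten_cons] at hu
      rcases List.prefix_or_prefix_of_prefix hu (List.prefix_append w _) with h | h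
      · exact Or.inl h
      · obtain ⟨u', rfl⟩ := h
        refine Or.inr ⟨u', rfl, m, ?_⟩
        exact (List.prefix_append_right_inj w).mp hu

private lemma aux {α : Type*} [LinearOrder α] (w₂ : List α)
    (hne : w₂ ≠ [])
    (hmax : ∀ z, w₂.IsRotated z → ¬ List.Lex (· < ·) w₂ z) :
    ∀ n (u : List α), u.length ≤ n → ∀ k : ℕ,
    IsPrefixOfInfPow u w₂ →
    w₂ ++ u ++ (List.replicate k w₂).flatten ≠ u ++ (List.replicate (k+1) w₂).flatten →
    List.Lex (· < ·) (w₂ ++ u ++ (List.replicate k w₂).flatten)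
      (u ++ (List.replicate (k+1) w₂).flatten) := by
  intro n
  induction n with
  | zero =>
      intro u hlen k hu hst
      have hu0 : u = [] := List.eq_nil_of_length_eq_zero (Nat.le_zero.mp hlen)
      subst hu0
      simp only [List.nil_append, List.append_nil] at hst ⊢
      rw [List.replicate_succ, List.flatten_cons] at hst
      exact absurd rfl hst
  | succ n ih =>
      intro u hlen k hu hst
      obtain ⟨m, hm⟩ := hu
      rcases decomp_prefix m u hm with h | ⟨u', rfl, hu'⟩
      · -- u is a prefix of w₂
        obtain ⟨v, hv⟩ := h
        subst hv
        set R := (List.replicate k (u ++ v)).flatten with hR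
        rw [List.replicate_succ, List.flatten_cons, ← hR] at hst ⊢
        have hrot : ¬ List.Lex (· < ·) (u ++ v) (v ++ u) :=
          hmax (v ++ u) List.isRotated_append
        rcases trichotomous_of (List.Lex (· < ·)) (v ++ u) (u ++ v) with hlt | heq | h1
        · have hlen' : (v ++ u).length = (u ++ v).length := by
            simp [Nat.add_comm]
          have := List.Lex.append_left _ (lex_append_same hlt hlen' R) u
          simp only [List.append_assoc] at this ⊢
          exact this
        · exfalso
          apply hst
          have h2 : (v ++ u) ++ R = (u ++ v) ++ R := by rw [heq]
          simp only [List.append_assoc] at h2 ⊢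
          rw [h2]
        · exact absurd h1 hrot
      · -- u = w₂ ++ u'
        have hlen' : u'.length ≤ n := by
          simp only [List.length_append] at hlen
          have : 1 ≤ w₂.length := List.length_pos_iff.mpr hne
          omega
        have hst' : w₂ ++ u' ++ (List.replicate k w₂).flatten ≠
            u' ++ (List.replicate (k+1) w₂).flatten := by
          intro h
          apply hst
          have h2 := congrArg (w₂ ++ ·) h
          simp only [List.append_assoc] at h2 ⊢
          exact h2
        have := ih u' hlen' k hu' hst'
        have := List.Lex.append_left _ this w₂
        simp only [List.append_assoc] at this ⊢
        exact this

/-- If `w₂` is nonempty and equal to its own lexicographically maximal rotation,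
`u` is a prefix of `w₂^∞`, and `s = w₂ u w₂^k`, `t = u w₂^{k+1}` with `s ≠ t`,
then `s ≺ t` lexicographically. -/
theorem shifted_power_lt {α : Type*} [LinearOrder α] (w₂ u : List α) (k : ℕ)
    (hne : w₂ ≠ [])
    (hmax : ∀ z, w₂.IsRotated z → ¬ List.Lex (· < ·) w₂ z)
    (hu : IsPrefixOfInfPow u w₂)
    (hst : w₂ ++ u ++ (List.replicate k w₂).flatten ≠ u ++ (List.replicate (k+1) w₂).flatten) :
    List.Lex (· < ·) (w₂ ++ u ++ (List.replicate k w₂).flatten)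
      (u ++ (List.replicate (k+1) w₂).flatten) :=
  aux w₂ hne hmax u.length u le_rfl k hu hst
end

section
/- Let k ≥ 1 be an integer and M, O, L, ΔO nonnegative reals with ΔO = (3/2)L − O and M ≤ O/k. If ΔO ≥ (6−k)L/(2(7k+2)), then 2M + 7O ≤ 11L. -/
/-!
Multiplying `M ≤ O / k` by `k` gives `2M + 7O ≤ (7k + 2) O / k`, so it suffices that
`(7k + 2) O ≤ 11 k L`. Substituting `O = (3/2) L - ΔO` into the deficit bound
`2 (7k + 2) ΔO ≥ (6 - k) L` gives exactly this, because `3 (7k + 2) - (6 - k) = 22 k`.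
-/

theorem overlap_mul_le_of_deficit_ge {k L O ΔO : ℝ} (hk : 0 ≤ k)
    (hdef : ΔO = 3 / 2 * L - O) (h : (6 - k) * L / (2 * (7 * k + 2)) ≤ ΔO) :
    (7 * k + 2) * O ≤ 11 * k * L := by
  rw [div_le_iff₀ (by positivity)] at h
  subst hdef
  linear_combination h / 2

theorem two_mul_add_seven_mul_le_of_le_div {k M O L : ℝ} (hk : 0 < k) (hMk : M ≤ O / k)
    (hO : (7 * k + 2) * O ≤ 11 * k * L) :
    2 * M + 7 * O ≤ 11 * L := by
  have hMk' : M * k ≤ O := (le_div_iff₀ hk).mp hMk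
  refine le_of_mul_le_mul_left ?_ hk
  calc k * (2 * M + 7 * O) = 2 * (M * k) + 7 * k * O := by ring
    _ ≤ 2 * O + 7 * k * O := by gcongr
    _ = (7 * k + 2) * O := by ring
    _ ≤ k * (11 * L) := by linarith

theorem deficit_implies_bound_general (k : ℕ) (M O L ΔO : ℝ)
    (hk : 1 ≤ k)
    (hdef : ΔO = 3 / 2 * L - O) (hMk : M ≤ O / k)
    (h : ΔO ≥ ((6 : ℝ) - k) * L / (2 * (7 * k + 2))) :
    2 * M + 7 * O ≤ 11 * L := by
  have hk₀ : (0 : ℝ) < k := by exact_mod_cast hk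
  exact two_mul_add_seven_mul_le_of_le_div hk₀ hMk
    (overlap_mul_le_of_deficit_ge hk₀.le hdef h)

/-- Main-claim lemma, second part: for a `k`-cycle, a lower bound on the overlap
deficit `ΔO` implies `2M + 7O ≤ 11L`. -/
theorem deficit_implies_bound (k : ℕ) (M O L ΔO : ℝ)
    (hk : 1 ≤ k) (hM : 0 ≤ M) (hO : 0 ≤ O) (hL : 0 ≤ L) (hΔO : 0 ≤ ΔO)
    (hdef : ΔO = 3 / 2 * L - O) (hMk : M ≤ O / k)
    (h : ΔO ≥ ((6 : ℝ) - k) * L / (2 * (7 * k + 2))) :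
    2 * M + 7 * O ≤ 11 * L :=
  deficit_implies_bound_general k M O L ΔO hk hdef hMk h
end

section
/- For every integer k ≥ 1, let w₁ = b a^k b a^{k+1} b a^{k+1} and w₂ = a^{k+1} b a^k b over the two-letter alphabet {a,b} with a < b, and let x_i = (w_i w_i) truncated to length 2|w_i| − 1 for i = 1,2. Then the overlap ov(x₁, x₂) (longest suffix of x₁ that is a prefix of x₂) has length 4k+5, and ov(x₂, x₁) has length 3k+4. -/
/-!
Truncating `w ++ w` to length `2|w| - 1` gives `w ++ w.dropLast`. Hence
`x₁ = b a^k b a^{k+1} b ++ x₂` and `x₂ = a^{k+1} ++ w₁.dropLast`, which exhibits both overlaps.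
The first is maximal because it is all of `x₂`; the second because `x₁` starts with `b`, while
every suffix of `x₂` longer than `w₁.dropLast` starts inside the leading block `a^{k+1}`.
-/

namespace List

variable {α : Type*}

theorem take_two_mul_length_sub_one_append_self (w : List α) :
    (w ++ w).take (2 * w.length - 1) = w ++ w.dropLast := by
  rw [take_append, take_of_length_le (by omega), dropLast_eq_take]
  congr 2
  omega

theorem length_le_of_suffix_append_of_prefix_cons {b : α} {u p s m : List α} (hb : b ∉ p)
    (hs : u <:+ p ++ s) (hp : u <+: b :: m) : u.length ≤ s.length := by
  induction p with
  | nil => exact hs.length_le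
  | cons a p ih =>
    rcases suffix_cons_iff.mp hs with rfl | hs
    · exact absurd (cons_prefix_cons.mp hp).1 (fun hab => hb (hab ▸ mem_cons_self))
    · exact ih (fun h => hb (mem_cons_of_mem a h)) hs

end List

open List

theorem tight_two_cycle_overlaps_general (k : ℕ) :
    ∀ w₁ w₂ x₁ x₂ : List Bool,
      w₁ = [true] ++ List.replicate k false ++ [true] ++ List.replicate (k+1) false
            ++ [true] ++ List.replicate (k+1) false →
      w₂ = List.replicate (k+1) false ++ [true] ++ List.replicate k false ++ [true] →
      x₁ = (w₁ ++ w₁).take (2 * w₁.length - 1) →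
      x₂ = (w₂ ++ w₂).take (2 * w₂.length - 1) →
      (∃ v : List Bool, v <:+ x₁ ∧ v <+: x₂ ∧ v.length = 4 * k + 5 ∧
        ∀ u : List Bool, u <:+ x₁ → u <+: x₂ → u.length ≤ 4 * k + 5) ∧
      (∃ v : List Bool, v <:+ x₂ ∧ v <+: x₁ ∧ v.length = 3 * k + 4 ∧
        ∀ u : List Bool, u <:+ x₂ → u <+: x₁ → u.length ≤ 3 * k + 4) := by
  intro w₁ w₂ x₁ x₂ hw₁ hw₂ hx₁ hx₂
  rw [take_two_mul_length_sub_one_append_self] at hx₁ hx₂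
  have hw₁_dropLast : w₁.dropLast = [true] ++ replicate k false ++ [true]
      ++ replicate (k+1) false ++ [true] ++ replicate k false := by
    rw [hw₁, replicate_succ', ← append_assoc, dropLast_concat]
  have hx₂_eq : x₂ = replicate (k+1) false ++ w₁.dropLast := by
    rw [hx₂, hw₂, dropLast_concat, hw₁_dropLast]
    simp
  have hx₁_eq : x₁ = [true] ++ replicate k false ++ [true] ++ replicate (k+1) false ++ [true]
      ++ x₂ := by
    simp [hx₁, hw₁, hx₂_eq, replicate_succ']
  obtain ⟨t, hx₁_cons⟩ : ∃ t, x₁ = true :: t := ⟨_, hx₁_eq⟩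
  have hx₂_length : x₂.length = 4 * k + 5 := by simp [hx₂_eq, hw₁_dropLast]; omega
  refine ⟨⟨x₂, ⟨_, hx₁_eq.symm⟩, prefix_rfl, hx₂_length, fun u _ hu => hx₂_length ▸ hu.length_le⟩,
    ⟨w₁.dropLast, ⟨_, hx₂_eq.symm⟩, (dropLast_prefix w₁).trans (hx₁ ▸ prefix_append _ _), ?_,
      fun u hu₂ hu₁ => ?_⟩⟩
  · simp [hw₁_dropLast]; omega
  · have hu_length :=
      length_le_of_suffix_append_of_prefix_cons (by simp) (hx₂_eq ▸ hu₂) (hx₁_cons ▸ hu₁)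
    simp [hw₁_dropLast] at hu_length; omega

/-- Tight example: over the alphabet `Bool` with `a = false < b = true`, let
`w₁ = b a^k b a^{k+1} b a^{k+1}`, `w₂ = a^{k+1} b a^k b` and
`xᵢ = (wᵢwᵢ)[1..2|wᵢ|−1]`. Then `|ov(x₁,x₂)| = 4k+5` and `|ov(x₂,x₁)| = 3k+4`. -/
theorem tight_two_cycle_overlaps (k : ℕ) (hk : 1 ≤ k) :
    ∀ w₁ w₂ x₁ x₂ : List Bool,
      w₁ = [true] ++ List.replicate k false ++ [true] ++ List.replicate (k+1) false
            ++ [true] ++ List.replicate (k+1) false →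
      w₂ = List.replicate (k+1) false ++ [true] ++ List.replicate k false ++ [true] →
      x₁ = (w₁ ++ w₁).take (2 * w₁.length - 1) →
      x₂ = (w₂ ++ w₂).take (2 * w₂.length - 1) →
      (∃ v : List Bool, v <:+ x₁ ∧ v <+: x₂ ∧ v.length = 4 * k + 5 ∧
        ∀ u : List Bool, u <:+ x₁ → u <+: x₂ → u.length ≤ 4 * k + 5) ∧
      (∃ v : List Bool, v <:+ x₂ ∧ v <+: x₁ ∧ v.length = 3 * k + 4 ∧
        ∀ u : List Bool, u <:+ x₂ → u <+: x₁ → u.length ≤ 3 * k + 4) :=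
  tight_two_cycle_overlaps_general k
end

section
/- For every integer k ≥ 1, the strings w_{2k} = b^k a^k and w_{2k−1} = a^{k−1} b^k (over alphabet {a,b}) are primitive, and for n ≥ 4 and the strings x_{2k} = b^k a^k b^k a^{k−1}, x_{2k−1} = a^{k−1} b^k a^{k−1} b^{k−1}, the overlap ov(x_{i+1}, x_i) has length ⌊3i/2⌋ for all 3 ≤ i ≤ n−1. -/
/-- `wS (2k) = b^k a^k`, `wS (2k-1) = a^{k-1} b^k`, with `a = false`, `b = true`. -/
def wS (i : ℕ) : List Bool :=
  if i % 2 = 0 then List.replicate (i / 2) true ++ List.replicate (i / 2) false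
  else List.replicate (i / 2) false ++ List.replicate (i / 2 + 1) true

/-- `xS (2k) = b^k a^k b^k a^{k-1}`, `xS (2k-1) = a^{k-1} b^k a^{k-1} b^{k-1}`. -/
def xS (i : ℕ) : List Bool :=
  if i % 2 = 0 then
    List.replicate (i / 2) true ++ List.replicate (i / 2) false ++
      List.replicate (i / 2) true ++ List.replicate (i / 2 - 1) false
  else
    List.replicate (i / 2) false ++ List.replicate (i / 2 + 1) true ++
      List.replicate (i / 2) false ++ List.replicate (i / 2) true

lemma prefix_replicate_eq {α : Type*} {a : α} {l : List α} {n : ℕ}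
    (h : l <+: List.replicate n a) : l = List.replicate l.length a :=
  List.eq_replicate_length.mpr fun _ hb => List.eq_of_mem_replicate (h.subset hb)

lemma suffix_replicate_eq {α : Type*} {a : α} {l : List α} {n : ℕ}
    (h : l <:+ List.replicate n a) : l = List.replicate l.length a :=
  List.eq_replicate_length.mpr fun _ hb => List.eq_of_mem_replicate (h.subset hb)

lemma prim_block {c d : Bool} (hcd : c ≠ d) (s t : ℕ) (hst : s ≤ t) (hts : t ≤ s + 1)
    (ht : 1 ≤ t) : Primitive (List.replicate s c ++ List.replicate t d) := by
  intro v m hm heq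
  have hv : v ≠ [] := by
    rintro rfl
    simp at heq
    omega
  have hvl : 1 ≤ v.length := List.length_pos_iff.mpr hv
  have hlen : s + t = m * v.length := by
    have := congrArg List.length heq
    simpa [List.length_flatten, List.map_replicate, List.sum_replicate, smul_eq_mul,
      mul_comm] using this
  have h2 : 2 * v.length ≤ m * v.length := Nat.mul_le_mul_right _ hm
  have hp : v.length ≤ s := by omega
  obtain ⟨j, rfl⟩ : ∃ j, m = j + 1 := ⟨m - 1, by omega⟩
  have hpre : v <+: List.replicate s c ++ List.replicate t d := by
    rw [heq, List.replicate_succ, List.flatten_cons]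
    exact List.prefix_append _ _
  have hsuf : v <:+ List.replicate s c ++ List.replicate t d := by
    rw [heq, List.replicate_succ', List.flatten_append]
    exact ⟨(List.replicate j v).flatten, by simp⟩
  have h1 : v <+: List.replicate s c :=
    List.prefix_of_prefix_length_le hpre (List.prefix_append _ _) (by simpa using hp)
  have h2' : v <:+ List.replicate t d :=
    List.suffix_of_suffix_length_le hsuf (List.suffix_append _ _) (by simp only [List.length_replicate]; omega)
  have hc : v = List.replicate v.length c := prefix_replicate_eq h1
  have hd : v = List.replicate v.length d := suffix_replicate_eq h2'
  have : c = d := by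
    have hmem : c ∈ v := hc ▸ List.mem_replicate.mpr ⟨by omega, rfl⟩
    exact List.eq_of_mem_replicate (hd ▸ hmem)
  exact hcd this

/-- The strings `w_{2k}` and `w_{2k-1}` are primitive, and along the path
`x_n → x_{n-1} → ⋯ → x₃` the overlap `ov(x_{i+1}, x_i)` has length `⌊3i/2⌋`. -/
theorem greedy_path_overlaps :
    (∀ k : ℕ, 1 ≤ k → Primitive (wS (2 * k)) ∧ Primitive (wS (2 * k - 1))) ∧
    (∀ n : ℕ, 4 ≤ n → ∀ i : ℕ, 3 ≤ i → i ≤ n - 1 →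
      ∃ v : List Bool, v <:+ xS (i + 1) ∧ v <+: xS i ∧ v.length = 3 * i / 2 ∧
        ∀ u : List Bool, u <:+ xS (i + 1) → u <+: xS i → u.length ≤ 3 * i / 2) := by
  constructor
  · intro k hk
    constructor
    · have h1 : wS (2 * k) = List.replicate k true ++ List.replicate k false := by
        unfold wS
        rw [if_pos (by omega), show 2 * k / 2 = k by omega]
      rw [h1]
      exact prim_block (by simp) k k le_rfl (by omega) hk
    · have h1 : wS (2 * k - 1) = List.replicate (k - 1) false ++ List.replicate k true := by
        unfold wS
        rw [if_neg (by omega), show (2 * k - 1) / 2 = k - 1 by omega,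
          show k - 1 + 1 = k by omega]
      rw [h1]
      exact prim_block (by simp) (k - 1) k (by omega) (by omega) hk
  · intro n _ i hi _
    rcases Nat.even_or_odd i with ⟨k, hk⟩ | ⟨k, hk⟩
    · -- even case : i = 2k, k ≥ 2
      have hk2 : 2 ≤ k := by omega
      have hx2 : xS i = List.replicate k true ++ (List.replicate k false ++
          (List.replicate k true ++ List.replicate (k - 1) false)) := by
        unfold xS
        rw [if_pos (by omega)]
        simp only [show i / 2 = k by omega, List.append_assoc]
      have hx1 : xS (i + 1) = List.replicate k false ++ (List.replicate (k + 1) true ++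
          (List.replicate k false ++ List.replicate k true)) := by
        unfold xS
        rw [if_neg (by omega)]
        simp only [show (i + 1) / 2 = k by omega, List.append_assoc]
      refine ⟨List.replicate k true ++ (List.replicate k false ++ List.replicate k true),
        ?_, ?_, ?_, ?_⟩
      · refine ⟨List.replicate k false ++ [true], ?_⟩
        rw [hx1, List.replicate_succ]
        simp
      · refine ⟨List.replicate (k - 1) false, ?_⟩
        rw [hx2]
        simp
      · simp
        omega
      · intro u hsuf hpre
        by_contra hcon
        push_neg at hcon
        have hcon' : 3 * k < u.length := by omega
        obtain ⟨w, hw⟩ := hsuf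
        obtain ⟨r, hr⟩ := hpre
        have hwlen : w.length + u.length = 4 * k + 1 := by
          have := congrArg List.length hw
          rw [hx1] at this
          simp at this
          omega
        have hwpre : w <+: xS (i + 1) := ⟨u, hw⟩
        have hblk : List.replicate k false <+: xS (i + 1) := by
          rw [hx1]; exact List.prefix_append _ _
        have hwsmall : w <+: List.replicate k false :=
          List.prefix_of_prefix_length_le hwpre hblk (by simp only [List.length_replicate]; omega)
        have hwrep : w = List.replicate w.length false := prefix_replicate_eq hwsmall
        have hcw : w.count true = 0 := by rw [hwrep]; simp [List.count_replicate]
        have hc1 : w.count true + u.count true = 2 * k + 1 := by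
          have := congrArg (List.count true) hw
          rw [hx1] at this
          simp [List.count_append, List.count_replicate] at this
          omega
        have hc2 : u.count true + r.count true = 2 * k := by
          have := congrArg (List.count true) hr
          rw [hx2] at this
          simp [List.count_append, List.count_replicate] at this
          omega
        omega
    · -- odd case : i = 2k+1, k ≥ 1
      have hk1 : 1 ≤ k := by omega
      have hx2 : xS i = List.replicate k false ++ (List.replicate (k + 1) true ++
          (List.replicate k false ++ List.replicate k true)) := by
        unfold xS
        rw [if_neg (by omega)]
        simp only [show i / 2 = k by omega, List.append_assoc]
      have hx1 : xS (i + 1) = List.replicate (k + 1) true ++ (List.replicate (k + 1) false ++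
          (List.replicate (k + 1) true ++ List.replicate k false)) := by
        unfold xS
        rw [if_pos (by omega)]
        simp only [show (i + 1) / 2 = k + 1 by omega, show k + 1 - 1 = k by omega,
          List.append_assoc]
      refine ⟨List.replicate k false ++ (List.replicate (k + 1) true ++ List.replicate k false),
        ?_, ?_, ?_, ?_⟩
      · refine ⟨List.replicate (k + 1) true ++ [false], ?_⟩
        rw [hx1]
        simp [List.replicate_succ]
      · refine ⟨List.replicate k true, ?_⟩
        rw [hx2]
        simp
      · simp
        omega
      · intro u hsuf hpre
        by_contra hcon
        push_neg at hcon
        have hcon' : 3 * k + 1 < u.length := by omega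
        obtain ⟨w, hw⟩ := hsuf
        obtain ⟨r, hr⟩ := hpre
        have hwlen : w.length + u.length = 4 * k + 3 := by
          have := congrArg List.length hw
          rw [hx1] at this
          simp at this
          omega
        have hrlen : u.length + r.length = 4 * k + 1 := by
          have := congrArg List.length hr
          rw [hx2] at this
          simp at this
          omega
        have hwpre : w <+: xS (i + 1) := ⟨u, hw⟩
        have hblk : List.replicate (k + 1) true <+: xS (i + 1) := by
          rw [hx1]; exact List.prefix_append _ _
        have hwsmall : w <+: List.replicate (k + 1) true :=
          List.prefix_of_prefix_length_le hwpre hblk (by simp only [List.length_replicate]; omega)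
        have hwrep : w = List.replicate w.length true := prefix_replicate_eq hwsmall
        have hcw : w.count true = w.length := by
          conv_lhs => rw [hwrep]
          simp [List.count_replicate]
        have hrsuf : r <:+ xS i := ⟨u, hr⟩
        have hblk2 : List.replicate k true <:+ xS i := by
          rw [hx2]
          exact (List.suffix_append _ _).trans
            ((List.suffix_append _ _).trans (List.suffix_append _ _))
        have hrsmall : r <:+ List.replicate k true :=
          List.suffix_of_suffix_length_le hrsuf hblk2 (by simp only [List.length_replicate]; omega)
        have hrrep : r = List.replicate r.length true := suffix_replicate_eq hrsmall
        have hcr : r.count true = r.length := by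
          conv_lhs => rw [hrrep]
          simp [List.count_replicate]
        have hc1 : w.count true + u.count true = 2 * k + 2 := by
          have := congrArg (List.count true) hw
          rw [hx1] at this
          simp [List.count_append, List.count_replicate] at this
          omega
        have hc2 : u.count true + r.count true = 2 * k + 1 := by
          have := congrArg (List.count true) hr
          rw [hx2] at this
          simp [List.count_append, List.count_replicate] at this
          omega
        omega
end
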